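/- arXiv:1201.5992 — 2 statements merged into one kernel-verified Lean document; each statement's English description precedes it below -/
import Mathlib

section
/- Let U ⊆ F_q³ be a set of q² − 2 points that does not determine the points of C, with ∑_{u∈U} u = (0,0,0), and suppose the line at infinity l(y,z,w) meets C for the nonzero triple (y,z,w). Then σ_{2l}(y,z,w) = σ₂(y,z,w)^l for all integers l with 0 ≤ l ≤ (q² − q − 2)/2. -/
/-- The dot product on `F³`. -/
def dot3 {F : Type*} [Field F] (u v : F × F × F) : F :=
  u.1 * v.1 + u.2.1 * v.2.1 + u.2.2 * v.2.2

/-- The nondegenerate quadratic form `Q(t₀,t₁,t₂) = t₁² − t₀t₂` defining the conic `C`. -/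
def quadQ {F : Type*} [Field F] (t : F × F × F) : F :=
  t.2.1 ^ 2 - t.1 * t.2.2

/-- `U` does not determine the points of the conic `C`:
`Q(u − u') ≠ 0` for all distinct `u, u' ∈ U`. -/
def NoDetermine {F : Type*} [Field F] (U : Finset (F × F × F)) : Prop :=
  ∀ u ∈ U, ∀ u' ∈ U, u ≠ u' → quadQ (u - u') ≠ 0

/-- The line at infinity `l(y,z,w)` meets the conic `C`. -/
def MeetsConic {F : Type*} [Field F] (v : F × F × F) : Prop :=
  ∃ t : F × F × F, t ≠ 0 ∧ quadQ t = 0 ∧ dot3 v t = 0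

/-- `σ_i(y,z,w)`: the `i`-th elementary symmetric function of the multiset
`{u·(y,z,w) : u ∈ U}`. -/
def sigmaU {F : Type*} [Field F] (U : Finset (F × F × F)) (v : F × F × F) (i : ℕ) : F :=
  (U.val.map (fun u => dot3 u v)).esymm i

/-!
Let `t ≠ 0` be isotropic with `v·t = 0`. For each `c`, the map `(u, μ) ↦ u + μt` embeds
`{u ∈ U | u·v = c} × F` into the plane `x·v = c` (two points of `U` never differ by a multiple of
`t`), so each value of `u ↦ u·v` is taken at most `q` times. As `|U| = q² - 2`, the multiset `M`
of these values is `q • F` minus two elements `a, b`, and `a + b = 0` because both `M` and `q • F`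
have sum zero. Hence `∏_{r ∈ M} (X + r) · (X² - a²) = (X^q - X)^q = X^(q²) - X^q`; comparing the
coefficients of `X^(q² - 2l)` for `q² - 2l > q` gives `σ_{2l} = a² σ_{2l-2}`.
-/

open Finset Polynomial

section Conic

variable {F : Type*} [Field F]

lemma quadQ_smul (μ : F) (t : F × F × F) : quadQ (μ • t) = μ ^ 2 * quadQ t := by
  simp only [quadQ, Prod.smul_fst, Prod.smul_snd, smul_eq_mul]
  ring

def dot3Right (v : F × F × F) : (F × F × F) →ₗ[F] F where
  toFun x := dot3 x v
  map_add' x y := by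
    simp only [dot3, Prod.fst_add, Prod.snd_add]
    ring
  map_smul' μ x := by
    simp only [dot3, Prod.smul_fst, Prod.smul_snd, smul_eq_mul, RingHom.id_apply]
    ring

@[simp]
lemma dot3Right_apply (v x : F × F × F) : dot3Right v x = dot3 x v := rfl

lemma dot3_comm (u v : F × F × F) : dot3 u v = dot3 v u := by
  simp only [dot3]
  ring

lemma exists_dot3_eq {v : F × F × F} (hv : v ≠ 0) (c : F) : ∃ x, dot3 x v = c := by
  obtain ⟨x, hx⟩ : ∃ x, dot3 x v ≠ 0 := by
    by_contra! h
    exact hv (Prod.ext (by simpa [dot3] using h (1, 0, 0))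
      (Prod.ext (by simpa [dot3] using h (0, 1, 0)) (by simpa [dot3] using h (0, 0, 1))))
  refine ⟨(c / dot3 x v) • x, ?_⟩
  rw [← dot3Right_apply, map_smul, dot3Right_apply, smul_eq_mul, div_mul_cancel₀ c hx]

variable [Fintype F] [DecidableEq F]

lemma card_filter_dot3_eq {v : F × F × F} (hv : v ≠ 0) (c : F) :
    #{x | dot3 x v = c} = Fintype.card F ^ 2 := by
  have hfiber (d : F) : #{x | dot3 x v = d} = #{x | dot3 x v = c} :=
    AddMonoidHom.card_fiber_eq_of_mem_range (dot3Right v) (exists_dot3_eq hv d)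
      (exists_dot3_eq hv c)
  have htotal := card_eq_sum_card_fiberwise (f := fun x => dot3 x v)
    (s := (univ : Finset (F × F × F))) (t := univ) (fun _ _ => mem_univ _)
  simp only [hfiber, sum_const, card_univ, Fintype.card_prod, smul_eq_mul] at htotal
  have hq : 0 < Fintype.card F := Fintype.card_pos
  nlinarith

lemma card_filter_dot3_le {U : Finset (F × F × F)} (hU : NoDetermine U) {v t : F × F × F}
    (hv : v ≠ 0) (ht0 : t ≠ 0) (htQ : quadQ t = 0) (hvt : dot3 v t = 0) (c : F) :
    #{u ∈ U | dot3 u v = c} ≤ Fintype.card F := by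
  have hmaps : ∀ p ∈ {u ∈ U | dot3 u v = c} ×ˢ (univ : Finset F),
      p.1 + p.2 • t ∈ ({x | dot3 x v = c} : Finset (F × F × F)) := by
    rintro ⟨u, μ⟩ hp
    simp only [mem_product, mem_filter] at hp
    rw [mem_filter, ← dot3Right_apply, map_add, map_smul, dot3Right_apply, dot3Right_apply,
      dot3_comm t, hvt, smul_zero, add_zero]
    exact ⟨mem_univ _, hp.1.2⟩
  have hinj : Set.InjOn (fun p : (F × F × F) × F => p.1 + p.2 • t)
      ({u ∈ U | dot3 u v = c} ×ˢ (univ : Finset F) : Finset _) := by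
    rintro ⟨u, μ⟩ hp ⟨u', μ'⟩ hp' heq
    simp only [coe_product, Set.mem_prod, mem_coe, mem_filter] at hp hp' heq
    have hdiff : u - u' = (μ' - μ) • t := by
      rw [sub_smul, sub_eq_sub_iff_add_eq_add, heq, add_comm]
    obtain rfl : u = u' := by
      by_contra hne
      exact hU u hp.1.1 u' hp'.1.1 hne (by rw [hdiff, quadQ_smul, htQ, mul_zero])
    have : (μ' - μ) • t = 0 := by rw [← hdiff, sub_self]
    obtain rfl : μ = μ' := (sub_eq_zero.mp ((smul_eq_zero.mp this).resolve_right ht0)).symm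
    rfl
  have hcard := card_le_card_of_injOn _ hmaps hinj
  rw [card_product, card_univ, card_filter_dot3_eq hv c, sq] at hcard
  exact Nat.le_of_mul_le_mul_right hcard Fintype.card_pos

end Conic

lemma Multiset.map_dot3_le_nsmul_univ {F : Type*} [Field F] [Fintype F] [DecidableEq F]
    {U : Finset (F × F × F)} (hU : NoDetermine U) {v t : F × F × F} (hv : v ≠ 0) (ht0 : t ≠ 0)
    (htQ : quadQ t = 0) (hvt : dot3 v t = 0) :
    U.val.map (fun u => dot3 u v) ≤ Fintype.card F • (univ : Finset F).val := by
  rw [Multiset.le_iff_count]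
  intro c
  rw [Multiset.count_nsmul, Multiset.count_univ, mul_one, Multiset.count_map]
  convert card_filter_dot3_le hU hv ht0 htQ hvt c using 2
  exact congrArg Multiset.card (Multiset.filter_congr fun _ _ => eq_comm)

lemma Multiset.esymm_two_mul_eq_pow {R : Type*} [CommRing R] (M : Multiset R) (s : R) (K : ℕ)
    (hM : (M.map fun r => X + C r).prod * (X ^ 2 - C s) = X ^ (card M + 2) - X ^ K) :
    ∀ m, 2 * m + K ≤ card M → M.esymm (2 * m) = s ^ m := by
  set P := (M.map fun r => X + C r).prod
  have hcoeff (j : ℕ) : (P * (X ^ 2 - C s)).coeff (j + 2) = P.coeff j - s * P.coeff (j + 2) := by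
    rw [mul_sub, coeff_sub, coeff_mul_X_pow, coeff_mul_C, mul_comm]
  intro m
  induction m with
  | zero => simp [Multiset.esymm]
  | succ m ih =>
    intro hm
    have hrec := hcoeff (card M - 2 * (m + 1))
    rw [hM, coeff_sub, coeff_X_pow, coeff_X_pow, if_neg (by omega), if_neg (by omega), sub_zero,
      prod_X_add_C_coeff M (by omega), prod_X_add_C_coeff M (by omega),
      show card M - (card M - 2 * (m + 1)) = 2 * (m + 1) by omega,
      show card M - (card M - 2 * (m + 1) + 2) = 2 * m by omega, ih (by omega)] at hrec
    rw [pow_succ]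
    linear_combination -hrec

lemma FiniteField.prod_univ_X_add_C (F : Type*) [Field F] [Fintype F] :
    ((univ : Finset F).val.map fun r => X + C r).prod = X ^ Fintype.card F - X := by
  have hmonic : (X ^ Fintype.card F - X : F[X]).Monic :=
    monic_X_pow_sub (by rw [degree_X]; exact_mod_cast Fintype.one_lt_card)
  have hroots := FiniteField.roots_X_pow_card_sub_X F
  have hsplit := prod_multiset_X_sub_C_of_monic_of_roots_card_eq hmonic (by
    rw [hroots, X_pow_card_sub_X_natDegree_eq F Fintype.one_lt_card]
    rfl)
  rw [hroots] at hsplit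
  rw [← hsplit]
  change ∏ r : F, (X + C r) = ∏ r : F, (X - C r)
  exact Fintype.prod_equiv (Equiv.neg F) _ _ fun r => by simp [sub_eq_add_neg]

lemma FiniteField.exists_prod_X_add_C_mul_X_sq_sub_C {F : Type*} [Field F] [Fintype F]
    [DecidableEq F] (M : Multiset F) (hle : M ≤ Fintype.card F • (univ : Finset F).val)
    (hcard : Multiset.card M + 2 = Fintype.card F ^ 2) (hsum : M.sum = 0) :
    ∃ a : F, (M.map fun r => X + C r).prod * (X ^ 2 - C (a ^ 2)) =
      X ^ (Multiset.card M + 2) - X ^ Fintype.card F := by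
  set q := Fintype.card F
  obtain ⟨a, b, hab⟩ : ∃ a b, q • (univ : Finset F).val - M = {a, b} := by
    apply Multiset.card_eq_two.mp
    rw [Multiset.card_sub hle, Multiset.card_nsmul, card_val, card_univ, ← sq]
    omega
  have hfull : M + {a, b} = q • (univ : Finset F).val := by
    rw [← hab]
    exact add_tsub_cancel_of_le hle
  have hb : b = -a := by
    have := congrArg Multiset.sum hfull
    rw [Multiset.sum_add, hsum, Multiset.sum_nsmul, nsmul_eq_mul, FiniteField.cast_card_eq_zero,
      zero_mul, zero_add] at this
    simpa [eq_neg_iff_add_eq_zero, add_comm] using this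
  refine ⟨a, ?_⟩
  calc (M.map fun r => X + C r).prod * (X ^ 2 - C (a ^ 2))
      = ((M + {a, b}).map fun r => X + C r).prod := by
        rw [hb, Multiset.map_add, Multiset.prod_add]
        simp only [Multiset.insert_eq_cons, Multiset.map_cons, Multiset.map_singleton,
          Multiset.prod_cons, Multiset.prod_singleton, C_neg, C_pow]
        ring
    _ = (X ^ q - X) ^ q := by
        rw [hfull, Multiset.map_nsmul, Multiset.prod_nsmul, FiniteField.prod_univ_X_add_C]
    _ = X ^ (Multiset.card M + 2) - X ^ q := by
        rw [← FiniteField.expand_card, map_sub, expand_X, map_pow, expand_X, ← pow_mul, hcard, sq]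

lemma Multiset.esymm_two_mul_eq_esymm_two_pow {F : Type*} [Field F] [Fintype F] [DecidableEq F]
    (M : Multiset F) (hle : M ≤ Fintype.card F • (univ : Finset F).val)
    (hcard : card M = Fintype.card F ^ 2 - 2) (hsum : M.sum = 0) (m : ℕ)
    (hm : 2 * m ≤ Fintype.card F ^ 2 - Fintype.card F - 2) :
    M.esymm (2 * m) = M.esymm 2 ^ m := by
  have hq : 1 < Fintype.card F ^ 2 := Fintype.one_lt_card.trans_le (Nat.le_self_pow two_ne_zero _)
  obtain ⟨a, ha⟩ := FiniteField.exists_prod_X_add_C_mul_X_sq_sub_C M hle (by omega) hsum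
  rcases m with _ | m
  · simp [Multiset.esymm]
  · rw [M.esymm_two_mul_eq_pow _ _ ha (m + 1) (by omega),
      M.esymm_two_mul_eq_pow _ _ ha 1 (by omega), pow_one]

theorem stmt_4_general {F : Type*} [Field F] [Fintype F]
    (U : Finset (F × F × F))
    (hUcard : U.card = Fintype.card F ^ 2 - 2)
    (hU : NoDetermine U)
    (hsum : ∑ u ∈ U, u = 0)
    (v : F × F × F) (hv : v ≠ 0) (hmeet : MeetsConic v) :
    ∀ l : ℕ, l ≤ (Fintype.card F ^ 2 - Fintype.card F - 2) / 2 →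
      sigmaU U v (2 * l) = sigmaU U v 2 ^ l := by
  intro l hl
  classical
  obtain ⟨t, ht0, htQ, hvt⟩ := hmeet
  refine Multiset.esymm_two_mul_eq_esymm_two_pow _
    (Multiset.map_dot3_le_nsmul_univ hU hv ht0 htQ hvt) ?_ ?_ l (by omega)
  · rw [Multiset.card_map, card_val, hUcard]
  · change ∑ u ∈ U, dot3Right v u = 0
    rw [← map_sum, hsum, map_zero]

theorem stmt_4 {p h : ℕ} (hp : p.Prime) (hodd : Odd p) (hh : 1 ≤ h)
    {F : Type*} [Field F] [Fintype F] [DecidableEq F]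
    (hcard : Fintype.card F = p ^ h)
    (U : Finset (F × F × F))
    (hUcard : U.card = Fintype.card F ^ 2 - 2)
    (hU : NoDetermine U)
    (hsum : ∑ u ∈ U, u = 0)
    (v : F × F × F) (hv : v ≠ 0) (hmeet : MeetsConic v) :
    ∀ l : ℕ, l ≤ (Fintype.card F ^ 2 - Fintype.card F - 2) / 2 →
      sigmaU U v (2 * l) = sigmaU U v 2 ^ l :=
  stmt_4_general U hUcard hU hsum v hv hmeet
end

section
/- Let U ⊆ F_q³ be a set of q² − 2 points that does not determine the points of C, with ∑_{u∈U} u = (0,0,0), and suppose the line at infinity l(y,z,w) meets C for the nonzero triple (y,z,w). Then σ_{q²−q+2k}(y,z,w) = σ₂(y,z,w)^{(q²−q+2k)/2} − σ₂(y,z,w)^k for all integers k with 0 ≤ k ≤ (q − 3)/2. -/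
open Polynomial Finset

section Conic

variable {F : Type*} [Field F]

def cross3 (a b : F × F × F) : F × F × F :=
  (a.2.1 * b.2.2 - a.2.2 * b.2.1, a.2.2 * b.1 - a.1 * b.2.2, a.1 * b.2.1 - a.2.1 * b.1)

lemma cross3_cross3 (a b c : F × F × F) :
    cross3 a (cross3 b c) = dot3 a c • b - dot3 a b • c := by
  ext <;> simp only [cross3, dot3, Prod.smul_fst, Prod.smul_snd, Prod.fst_sub, Prod.snd_sub,
    smul_eq_mul] <;> ring

lemma cross3_smul_right (a b : F × F × F) (r : F) : cross3 a (r • b) = r • cross3 a b := by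
  ext <;> simp only [cross3, Prod.smul_fst, Prod.smul_snd, smul_eq_mul] <;> ring

lemma dot3_sub_left (u u' v : F × F × F) : dot3 (u - u') v = dot3 u v - dot3 u' v := by
  simp only [dot3, Prod.fst_sub, Prod.snd_sub]; ring

lemma dot3_sum_left {ι : Type*} (s : Finset ι) (u : ι → F × F × F) (v : F × F × F) :
    dot3 (∑ i ∈ s, u i) v = ∑ i ∈ s, dot3 (u i) v := by
  simp only [dot3, Prod.fst_sum, Prod.snd_sum, sum_add_distrib, sum_mul]

lemma exists_dot3_ne_zero {v : F × F × F} (hv : v ≠ 0) : ∃ e, dot3 v e ≠ 0 := by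
  by_contra! h
  have h₀ := h (1, 0, 0)
  have h₁ := h (0, 1, 0)
  have h₂ := h (0, 0, 1)
  simp only [dot3, mul_one, mul_zero, add_zero, zero_add] at h₀ h₁ h₂
  exact hv (Prod.ext h₀ (Prod.ext h₁ h₂))

-- For `δ × t = 0`, each `t_j² Q(δ) = δ_j² Q(t)`.
lemma quadQ_eq_zero_of_cross3_eq_zero {δ t : F × F × F} (h : cross3 δ t = 0) (ht : t ≠ 0)
    (hQt : quadQ t = 0) : quadQ δ = 0 := by
  obtain ⟨h₀, h₁, h₂⟩ : δ.2.1 * t.2.2 - δ.2.2 * t.2.1 = 0 ∧ δ.2.2 * t.1 - δ.1 * t.2.2 = 0 ∧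
      δ.1 * t.2.1 - δ.2.1 * t.1 = 0 := by
    simpa [cross3, Prod.ext_iff] using h
  unfold quadQ at hQt ⊢
  by_contra hQ
  refine ht (Prod.ext ?_ (Prod.ext ?_ ?_)) <;>
    refine pow_eq_zero_iff two_ne_zero |>.mp <| (mul_eq_zero.mp ?_).resolve_right hQ
  · linear_combination (-(t.1 * δ.2.1 + δ.1 * t.2.1)) * h₂ - t.1 * δ.1 * h₁ + δ.1 ^ 2 * hQt
  · linear_combination δ.1 * t.2.1 * h₀ - δ.2.1 * t.2.2 * h₂ + δ.2.1 ^ 2 * hQt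
  · linear_combination (t.2.2 * δ.2.1 + δ.2.2 * t.2.1) * h₀ + t.2.2 * δ.2.2 * h₁ + δ.2.2 ^ 2 * hQt

-- `v × (t × e) = (v·e) t`, so `δ ⊥ v` and `δ ⊥ t × e` force `δ × t = 0`.
lemma quadQ_eq_zero_of_dot3_eq_zero {v t e δ : F × F × F} (ht : t ≠ 0) (hQt : quadQ t = 0)
    (hvt : dot3 v t = 0) (hve : dot3 v e ≠ 0) (hδv : dot3 δ v = 0)
    (hδw : dot3 δ (cross3 t e) = 0) : quadQ δ = 0 := by
  have hvw : cross3 v (cross3 t e) = dot3 v e • t := by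
    rw [cross3_cross3, hvt, zero_smul, sub_zero]
  have hδt : dot3 v e • cross3 δ t = 0 := by
    rw [← cross3_smul_right, ← hvw, cross3_cross3, hδv, hδw, zero_smul, zero_smul, sub_zero]
  exact quadQ_eq_zero_of_cross3_eq_zero ((smul_eq_zero.mp hδt).resolve_left hve) ht hQt

lemma card_filter_dot3_eq_le [Fintype F] [DecidableEq F] {U : Finset (F × F × F)}
    (hU : NoDetermine U) {v : F × F × F} (hv : v ≠ 0) (hmeet : MeetsConic v) (c : F) :
    #{u ∈ U | dot3 u v = c} ≤ Fintype.card F := by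
  obtain ⟨t, ht, hQt, hvt⟩ := hmeet
  obtain ⟨e, he⟩ := exists_dot3_ne_zero hv
  refine (card_le_card_of_injOn (dot3 · (cross3 t e)) (fun _ _ => mem_coe.mpr (mem_univ _))
    ?_).trans_eq card_univ
  intro u hu u' hu' huu'
  simp only [mem_coe, mem_filter] at hu hu'
  by_contra hne
  refine hU u hu.1 u' hu'.1 hne (quadQ_eq_zero_of_dot3_eq_zero ht hQt hvt he ?_ ?_)
  · rw [dot3_sub_left, hu.2, hu'.2, sub_self]
  · rw [dot3_sub_left, sub_eq_zero]
    exact huu'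

end Conic

section Polynomial

lemma Polynomial.coeff_mul_X_sq_sub_C_mul_X_add_C {R : Type*} [CommRing R] (P : R[X]) (e f : R)
    (j : ℕ) : (P * (X ^ 2 - C e * X + C f)).coeff (j + 2) =
      P.coeff j - e * P.coeff (j + 1) + f * P.coeff (j + 2) := by
  rw [mul_add, mul_sub, ← mul_assoc, mul_comm P (C e), mul_assoc, coeff_add, coeff_sub,
    coeff_mul_X_pow, coeff_C_mul, coeff_mul_X, coeff_mul_C, mul_comm _ f]

lemma Polynomial.coeff_eq_mul_coeff_add_two_of_mul_X_sq_sub_C {R : Type*} [CommRing R]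
    {P Q : R[X]} {σ : R} (h : P * (X ^ 2 - C σ) = Q) (j : ℕ) :
    P.coeff j = σ * P.coeff (j + 2) + Q.coeff (j + 2) := by
  have hX : (X ^ 2 - C σ : R[X]) = X ^ 2 - C 0 * X + C (-σ) := by simp [sub_eq_add_neg]
  have hcoeff := coeff_mul_X_sq_sub_C_mul_X_add_C P 0 (-σ) j
  rw [← hX, h] at hcoeff
  linear_combination -hcoeff

lemma Multiset.coeff_prod_X_sub_C_card_sub {R : Type*} [CommRing R] (s : Multiset R) {i : ℕ}
    (hi : i ≤ card s) :
    (s.map fun c => X - C c).prod.coeff (card s - i) = (-1) ^ i * s.esymm i := by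
  rw [prod_X_sub_C_coeff s (Nat.sub_le _ _), Nat.sub_sub_self hi]

lemma eq_pow_mul_of_forall_eq_mul {M : Type*} [Monoid M] (f : ℕ → M) (a : M) (m : ℕ) :
    ∀ K, (∀ i < K, f (m + 2 * i) = a * f (m + 2 * i + 2)) → f m = a ^ K * f (m + 2 * K)
  | 0, _ => by simp
  | K + 1, h => by
    rw [eq_pow_mul_of_forall_eq_mul f a m K fun i hi => h i (by omega), h K K.lt_succ_self,
      ← mul_assoc, ← pow_succ]
    rfl

variable {F : Type*} [Field F] [Fintype F]

lemma FiniteField.prod_univ_X_sub_C :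
    (univ.val.map fun c : F => X - C c).prod = X ^ Fintype.card F - X := by
  have hmonic : (X ^ Fintype.card F - X : F[X]).Monic :=
    monic_X_pow_sub (by rw [degree_X]; exact_mod_cast Fintype.one_lt_card)
  rw [← roots_X_pow_card_sub_X]
  refine prod_multiset_X_sub_C_of_monic_of_roots_card_eq hmonic ?_
  rw [roots_X_pow_card_sub_X, X_pow_card_sub_X_natDegree_eq _ Fintype.one_lt_card]
  rfl

lemma FiniteField.prod_card_nsmul_univ_X_sub_C :
    ((Fintype.card F • univ.val).map fun c : F => X - C c).prod =
      X ^ (Fintype.card F ^ 2) - X ^ Fintype.card F := by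
  rw [Multiset.map_nsmul, Multiset.prod_nsmul, prod_univ_X_sub_C, ← expand_card]
  simp [← pow_mul, sq]

variable [DecidableEq F]

lemma exists_mul_X_sub_C_mul_X_sub_C_eq (s : Multiset F)
    (hcard : Multiset.card s = Fintype.card F ^ 2 - 2) (hcount : ∀ c, s.count c ≤ Fintype.card F) :
    ∃ a b : F, (s.map fun c => X - C c).prod * ((X - C a) * (X - C b)) =
      X ^ (Fintype.card F ^ 2) - X ^ Fintype.card F := by
  have hle : s ≤ Fintype.card F • univ.val :=
    Multiset.le_iff_count.mpr fun c => by simpa [Multiset.count_nsmul] using hcount c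
  have hcompl : Multiset.card (Fintype.card F • univ.val - s) = 2 := by
    have : 2 ^ 2 ≤ Fintype.card F ^ 2 := Nat.pow_le_pow_left Fintype.one_lt_card 2
    rw [Multiset.card_sub hle, Multiset.card_nsmul, card_val, card_univ, hcard, ← sq]
    omega
  obtain ⟨a, b, hab⟩ := Multiset.card_eq_two.mp hcompl
  refine ⟨a, b, ?_⟩
  calc _ = ((s + (Fintype.card F • univ.val - s)).map fun c => X - C c).prod := by
        rw [Multiset.map_add, Multiset.prod_add, hab]
        simp only [Multiset.insert_eq_cons, Multiset.map_cons, Multiset.map_singleton,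
          Multiset.prod_cons, Multiset.prod_singleton]
    _ = _ := by rw [add_tsub_cancel_of_le hle, FiniteField.prod_card_nsmul_univ_X_sub_C]

lemma prod_X_sub_C_mul_X_sq_sub_C_esymm_two (s : Multiset F) (hq : 3 ≤ Fintype.card F)
    (hcard : Multiset.card s = Fintype.card F ^ 2 - 2) (hcount : ∀ c, s.count c ≤ Fintype.card F)
    (hsum : s.sum = 0) :
    (s.map fun c => X - C c).prod * (X ^ 2 - C (s.esymm 2)) =
      X ^ (Fintype.card F ^ 2) - X ^ Fintype.card F := by
  obtain ⟨a, b, hab⟩ := exists_mul_X_sub_C_mul_X_sub_C_eq s hcard hcount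
  set q := Fintype.card F
  set R := (s.map fun c => X - C c).prod
  have h3q : 3 * q ≤ q ^ 2 := by nlinarith
  obtain ⟨n, hn⟩ : ∃ n, Multiset.card s = n + 2 := ⟨Multiset.card s - 2, by omega⟩
  have htop (i : ℕ) (hi : i ≤ 2) : R.coeff (n + 2 - i) = (-1) ^ i * s.esymm i := by
    rw [← hn]
    exact s.coeff_prod_X_sub_C_card_sub (by omega)
  have hR₂ : R.coeff (n + 2) = 1 := by simpa [Multiset.esymm] using htop 0 (by norm_num)
  have hR₁ : R.coeff (n + 1) = 0 := by
    simpa [Multiset.esymm, Multiset.powersetCard_one, hsum] using htop 1 (by norm_num)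
  have hR₀ : R.coeff n = s.esymm 2 := by simpa using htop 2 le_rfl
  have hR₃ : R.coeff (n + 3) = 0 :=
    coeff_eq_zero_of_natDegree_lt (by rw [natDegree_multiset_prod_X_sub_C_eq_card, hn]; omega)
  have hD : (X - C a) * (X - C b) = X ^ 2 - C (a + b) * X + C (a * b) := by
    simp only [map_add, map_mul]; ring
  rw [hD] at hab
  have hc₁ := congrArg (coeff · (n + 1 + 2)) hab
  have hc₀ := congrArg (coeff · (n + 2)) hab
  simp only [coeff_mul_X_sq_sub_C_mul_X_add_C, coeff_sub, coeff_X_pow] at hc₁ hc₀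
  rw [hR₁, hR₂, hR₃, if_neg (by omega), if_neg (by omega)] at hc₁
  rw [hR₀, hR₁, hR₂, if_neg (by omega), if_neg (by omega)] at hc₀
  have hsum_ab : a + b = 0 := by linear_combination -hc₁
  have hprod_ab : a * b = -s.esymm 2 := by linear_combination hc₀
  rwa [hsum_ab, hprod_ab, map_zero, zero_mul, sub_zero, map_neg, ← sub_eq_add_neg] at hab

theorem Multiset.esymm_card_sq_sub_card_add_two_mul (s : Multiset F) (hq : 3 ≤ Fintype.card F)
    (hcard : Multiset.card s = Fintype.card F ^ 2 - 2) (hcount : ∀ c, s.count c ≤ Fintype.card F)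
    (hsum : s.sum = 0) {k : ℕ} (hk : k ≤ (Fintype.card F - 3) / 2) :
    s.esymm (Fintype.card F ^ 2 - Fintype.card F + 2 * k) =
      s.esymm 2 ^ ((Fintype.card F ^ 2 - Fintype.card F + 2 * k) / 2) - s.esymm 2 ^ k := by
  have hrec := coeff_eq_mul_coeff_add_two_of_mul_X_sq_sub_C
    (prod_X_sub_C_mul_X_sq_sub_C_esymm_two s hq hcard hcount hsum)
  set q := Fintype.card F
  set σ := s.esymm 2
  set R := (s.map fun c => X - C c).prod
  have hP (j : ℕ) (h₁ : j ≠ q ^ 2) (h₂ : j ≠ q) : (X ^ (q ^ 2) - X ^ q : F[X]).coeff j = 0 := by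
    simp [coeff_X_pow, h₁, h₂]
  have h3q : 3 * q ≤ q ^ 2 := by nlinarith
  obtain ⟨M, hM⟩ : ∃ M, q ^ 2 - q = 2 * M := by
    obtain ⟨M, hM⟩ := Nat.even_mul_pred_self q
    exact ⟨M, by rw [sq, ← Nat.mul_sub_one, hM, two_mul]⟩
  have hRq : R.coeff q = σ ^ (M - 1) := by
    rw [eq_pow_mul_of_forall_eq_mul R.coeff σ q (M - 1) fun i hi => by
      rw [hrec, hP _ (by omega) (by omega), add_zero]]
    have htop := s.coeff_prod_X_sub_C_card_sub (i := 0) (Nat.zero_le _)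
    rw [show Multiset.card s - 0 = q + 2 * (M - 1) by omega] at htop
    simp [htop, Multiset.esymm, R]
  have hRq₂ : R.coeff (q - 2) = σ ^ M - 1 := by
    rw [hrec, Nat.sub_add_cancel (by omega), hRq, coeff_sub, coeff_X_pow_self, coeff_X_pow,
      if_neg (by omega), ← pow_succ', Nat.sub_add_cancel (by omega)]
    ring
  have hRk : R.coeff (q - 2 - 2 * k) = σ ^ k * (σ ^ M - 1) := by
    rw [eq_pow_mul_of_forall_eq_mul R.coeff σ _ k fun i hi => by
      rw [hrec, hP _ (by omega) (by omega), add_zero],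
      show q - 2 - 2 * k + 2 * k = q - 2 by omega, hRq₂]
  have hsymm := s.coeff_prod_X_sub_C_card_sub (i := q ^ 2 - q + 2 * k) (by omega)
  rw [show Multiset.card s - (q ^ 2 - q + 2 * k) = q - 2 - 2 * k by omega, hRk,
    show q ^ 2 - q + 2 * k = 2 * (M + k) by omega, pow_mul, neg_one_sq, one_pow, one_mul] at hsymm
  rw [show q ^ 2 - q + 2 * k = 2 * (M + k) by omega, Nat.mul_div_cancel_left _ two_pos, ← hsymm]
  ring

end Polynomial

theorem stmt_5 {p h : ℕ} (hp : p.Prime) (hodd : Odd p) (hh : 1 ≤ h)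
    {F : Type*} [Field F] [Fintype F] [DecidableEq F]
    (hcard : Fintype.card F = p ^ h)
    (U : Finset (F × F × F))
    (hUcard : U.card = Fintype.card F ^ 2 - 2)
    (hU : NoDetermine U)
    (hsum : ∑ u ∈ U, u = 0)
    (v : F × F × F) (hv : v ≠ 0) (hmeet : MeetsConic v) :
    ∀ k : ℕ, k ≤ (Fintype.card F - 3) / 2 →
      sigmaU U v (Fintype.card F ^ 2 - Fintype.card F + 2 * k) =
        sigmaU U v 2 ^ ((Fintype.card F ^ 2 - Fintype.card F + 2 * k) / 2) -
          sigmaU U v 2 ^ k := by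
  intro k hk
  have hp3 : 3 ≤ p := by
    obtain ⟨m, rfl⟩ := hodd
    have := hp.two_le
    omega
  have hq : 3 ≤ Fintype.card F := hcard ▸ hp3.trans (Nat.le_self_pow (by omega) p)
  refine (U.val.map (dot3 · v)).esymm_card_sq_sub_card_add_two_mul hq (by simpa using hUcard)
    (fun c => ?_) ?_ hk
  · rw [Multiset.count_map, ← Finset.filter_val, Finset.card_val]
    simpa only [eq_comm] using card_filter_dot3_eq_le hU hv hmeet c
  · change ∑ u ∈ U, dot3 u v = 0
    rw [← dot3_sum_left, hsum]
    simp [dot3]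
end
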